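/- Let ψ(μ) = 1{μ ≥ 0}·φ(x - μ) for fixed x ∈ ℝ, where φ is the standard normal density. Then there exists a constant C (depending on x) such that the Fourier transform ψ*(t) = ∫₀^∞ φ(x-μ) e^{itμ} dμ satisfies |ψ*(t)| ≤ C/√(t² + 1) for all t ∈ ℝ. -/

import Mathlib

/-!
Two bounds on `ψ*(t) = ∫_{μ > 0} φ(x - μ) e^{itμ} dμ` combine. Trivially `|ψ*(t)| ≤ ∫ φ`.
Integrating by parts against `e^{itμ}`, whose antiderivative is `e^{itμ}/(it)`, gives
`|t| |ψ*(t)| ≤ φ(x) + ∫ |φ'|`. If `a ≤ K` and `|t| a ≤ K` then `a² (t² + 1) ≤ 2 K²`,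
i.e. `a ≤ √2 K / √(t² + 1)`.
-/

open MeasureTheory

/-- Standard normal density. -/
noncomputable def stdNormalPDF (y : ℝ) : ℝ :=
  (Real.sqrt (2 * Real.pi))⁻¹ * Real.exp (-y ^ 2 / 2)

open Set Filter Complex

lemma le_sqrt_two_mul_div_sqrt_sq_add_one {a K t : ℝ} (ha : 0 ≤ a) (h₀ : a ≤ K)
    (h₁ : |t| * a ≤ K) : a ≤ √2 * K / √(t ^ 2 + 1) := by
  have hK : 0 ≤ K := ha.trans h₀
  rw [le_div_iff₀ (by positivity)]
  calc a * √(t ^ 2 + 1) = √((|t| * a) ^ 2 + a ^ 2) := by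
        rw [← Real.sqrt_sq ha, ← Real.sqrt_mul (sq_nonneg a), Real.sqrt_sq ha, mul_pow, sq_abs]
        ring_nf
    _ ≤ √(2 * K ^ 2) := by
        gcongr
        nlinarith [pow_le_pow_left₀ ha h₀ 2, pow_le_pow_left₀ (by positivity) h₁ 2]
    _ = √2 * K := by rw [Real.sqrt_mul zero_le_two, Real.sqrt_sq hK]

lemma norm_cexp_I_mul_ofReal_mul (t μ : ℝ) : ‖cexp (I * t * μ)‖ = 1 := by
  simpa [mul_assoc] using norm_exp_I_mul_ofReal (t * μ)

section FourierIoi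

variable {f f' : ℝ → ℂ} {a : ℝ}

lemma norm_integral_Ioi_mul_cexp_le (t : ℝ) :
    ‖∫ μ in Ioi a, f μ * cexp (I * t * μ)‖ ≤ ∫ μ in Ioi a, ‖f μ‖ :=
  (norm_integral_le_integral_norm _).trans_eq <| by
    simp only [norm_mul, norm_cexp_I_mul_ofReal_mul, mul_one]

lemma integrableOn_Ioi_mul_cexp (hf : IntegrableOn f (Ioi a)) (t : ℝ) :
    IntegrableOn (fun μ => f μ * cexp (I * t * μ)) (Ioi a) :=
  Integrable.mul_bdd (c := 1) hf (Continuous.aestronglyMeasurable (by fun_prop))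
    (.of_forall fun μ => (norm_cexp_I_mul_ofReal_mul t μ).le)

lemma abs_mul_norm_integral_Ioi_mul_cexp_le (hf : ∀ μ ∈ Ici a, HasDerivAt f (f' μ) μ)
    (hfi : IntegrableOn f (Ioi a)) (hf'i : IntegrableOn f' (Ioi a)) (t : ℝ) :
    |t| * ‖∫ μ in Ioi a, f μ * cexp (I * t * μ)‖ ≤ ‖f a‖ + ∫ μ in Ioi a, ‖f' μ‖ := by
  set e : ℝ → ℂ := fun μ => cexp (I * t * μ)
  have he : ∀ μ, HasDerivAt e (e μ * (I * t)) μ := fun μ => by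
    simpa using ((hasDerivAt_id (μ : ℂ)).const_mul (I * t)).cexp.comp_ofReal
  have hlim : Tendsto (fun μ => f μ * e μ) atTop (nhds 0) := by
    have := tendsto_zero_of_hasDerivAt_of_integrableOn_Ioi
      (fun μ hμ => hf μ (mem_Ici_of_Ioi hμ)) hf'i hfi
    rw [tendsto_zero_iff_norm_tendsto_zero] at this ⊢
    simpa [e, norm_cexp_I_mul_ofReal_mul] using this
  have hfe : IntegrableOn (fun μ => f μ * e μ) (Ioi a) := integrableOn_Ioi_mul_cexp hfi t
  have hf'e : IntegrableOn (fun μ => f' μ * e μ) (Ioi a) := integrableOn_Ioi_mul_cexp hf'i t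
  have hderiv : ∀ μ ∈ Ici a,
      HasDerivAt (fun μ => f μ * e μ) (f' μ * e μ + I * t * (f μ * e μ)) μ :=
    fun μ hμ => ((hf μ hμ).mul (he μ)).congr_deriv (by ring)
  -- `f e → 0` at `∞` since `f, f'` are integrable, so `(f e)' = f' e + i t f e` integrates
  -- to `-f(a) e(a)` over `(a, ∞)`.
  have hparts := integral_Ioi_of_hasDerivAt_of_tendsto' hderiv
    (hf'e.add (hfe.const_mul (I * t))) hlim
  rw [integral_add hf'e (hfe.const_mul _), integral_const_mul, zero_sub] at hparts
  have key : I * t * ∫ μ in Ioi a, f μ * e μ = -(f a * e a) - ∫ μ in Ioi a, f' μ * e μ := by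
    linear_combination hparts
  calc |t| * ‖∫ μ in Ioi a, f μ * e μ‖ = ‖I * t * ∫ μ in Ioi a, f μ * e μ‖ := by
        simp
    _ ≤ ‖f a * e a‖ + ‖∫ μ in Ioi a, f' μ * e μ‖ := by
        simpa [key] using norm_sub_le (-(f a * e a)) (∫ μ in Ioi a, f' μ * e μ)
    _ ≤ ‖f a‖ + ∫ μ in Ioi a, ‖f' μ‖ := by
        rw [norm_mul, norm_cexp_I_mul_ofReal_mul, mul_one]
        exact add_le_add_right (norm_integral_Ioi_mul_cexp_le t) _

lemma norm_integral_Ioi_mul_cexp_le_div_sqrt (hf : ∀ μ ∈ Ici a, HasDerivAt f (f' μ) μ)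
    (hfi : IntegrableOn f (Ioi a)) (hf'i : IntegrableOn f' (Ioi a)) (t : ℝ) :
    ‖∫ μ in Ioi a, f μ * cexp (I * t * μ)‖ ≤
      √2 * ((∫ μ in Ioi a, ‖f μ‖) + (‖f a‖ + ∫ μ in Ioi a, ‖f' μ‖)) / √(t ^ 2 + 1) := by
  have hf_nonneg : 0 ≤ ∫ μ in Ioi a, ‖f μ‖ := integral_nonneg fun _ => norm_nonneg _
  have hf'_nonneg : 0 ≤ ‖f a‖ + ∫ μ in Ioi a, ‖f' μ‖ :=
    add_nonneg (norm_nonneg _) (integral_nonneg fun _ => norm_nonneg _)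
  exact le_sqrt_two_mul_div_sqrt_sq_add_one (norm_nonneg _)
    ((norm_integral_Ioi_mul_cexp_le t).trans (le_add_of_nonneg_right hf'_nonneg))
    ((abs_mul_norm_integral_Ioi_mul_cexp_le hf hfi hf'i t).trans
      (le_add_of_nonneg_left hf_nonneg))

end FourierIoi

lemma stdNormalPDF_pos (y : ℝ) : 0 < stdNormalPDF y := by
  unfold stdNormalPDF; positivity

lemma hasDerivAt_stdNormalPDF (y : ℝ) : HasDerivAt stdNormalPDF (-y * stdNormalPDF y) y := by
  have h : HasDerivAt (fun y : ℝ => -y ^ 2 / 2) (-y) y := by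
    simpa using ((hasDerivAt_pow 2 y).neg.div_const 2).congr_deriv (by ring)
  exact (h.exp.const_mul (√(2 * Real.pi))⁻¹).congr_deriv (by unfold stdNormalPDF; ring)

lemma integrable_stdNormalPDF : Integrable stdNormalPDF :=
  ((integrable_exp_neg_mul_sq (by norm_num : (0 : ℝ) < 1 / 2)).const_mul
    (√(2 * Real.pi))⁻¹).congr
    (.of_forall fun y => by unfold stdNormalPDF; ring_nf)

lemma integrable_mul_stdNormalPDF : Integrable fun y => y * stdNormalPDF y :=
  ((integrable_mul_exp_neg_mul_sq (by norm_num : (0 : ℝ) < 1 / 2)).const_mul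
    (√(2 * Real.pi))⁻¹).congr
    (.of_forall fun y => by unfold stdNormalPDF; ring_nf)

/-- For `ψ(μ) = 1{μ ≥ 0} φ(x - μ)` with fixed `x`, the Fourier transform
`ψ*(t) = ∫₀^∞ φ(x-μ) e^{itμ} dμ` satisfies `|ψ*(t)| ≤ C/√(t²+1)` for some constant
`C` depending on `x`. -/
theorem stmt16 (x : ℝ) :
    ∃ C : ℝ, 0 < C ∧ ∀ t : ℝ,
      ‖∫ μ in Set.Ici (0 : ℝ),
          (stdNormalPDF (x - μ) : ℂ) * Complex.exp (Complex.I * (t : ℂ) * (μ : ℂ))‖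
        ≤ C / Real.sqrt (t ^ 2 + 1) := by
  set f : ℝ → ℂ := fun μ => (stdNormalPDF (x - μ) : ℂ)
  set f' : ℝ → ℂ := fun μ => ((x - μ) * stdNormalPDF (x - μ) : ℝ)
  have hf : ∀ μ ∈ Ici (0 : ℝ), HasDerivAt f (f' μ) μ := fun μ _ =>
    ((hasDerivAt_stdNormalPDF (x - μ)).comp μ ((hasDerivAt_id μ).const_sub x)).ofReal_comp
      |>.congr_deriv (by simp [f']; ring)
  have hfi : IntegrableOn f (Ioi 0) :=
    (integrable_stdNormalPDF.comp_sub_left x).ofReal.integrableOn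
  have hf'i : IntegrableOn f' (Ioi 0) :=
    (integrable_mul_stdNormalPDF.comp_sub_left x).ofReal.integrableOn
  have hf_pos : 0 < ‖f 0‖ := by simpa [f] using (stdNormalPDF_pos x).ne'
  have hf_nonneg : 0 ≤ ∫ μ in Ioi 0, ‖f μ‖ := integral_nonneg fun _ => norm_nonneg _
  have hf'_nonneg : 0 ≤ ∫ μ in Ioi 0, ‖f' μ‖ := integral_nonneg fun _ => norm_nonneg _
  refine ⟨√2 * ((∫ μ in Ioi 0, ‖f μ‖) + (‖f 0‖ + ∫ μ in Ioi 0, ‖f' μ‖)), ?_, fun t => ?_⟩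
  · exact mul_pos (by positivity)
      (add_pos_of_nonneg_of_pos hf_nonneg (add_pos_of_pos_of_nonneg hf_pos hf'_nonneg))
  rw [integral_Ici_eq_integral_Ioi]
  exact norm_integral_Ioi_mul_cexp_le_div_sqrt hf hfi hf'i t
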